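/- arXiv:2409.03001 — 7 statements merged into one kernel-verified Lean document; each statement's English description precedes it below -/
import Mathlib

section
/- For every nonnegative integer k and all nonzero complex numbers a, b, a′, b′, the recurrence g_{k+1,0}(a,b,a′,b′) = ((b+b′)/(k+1))·g_{k,0}(a,b,a′,b′) holds (both series converging absolutely). -/
open scoped BigOperators

/-- Generalized Laguerre polynomial `L_n^m(x) = Σ_{q=0}^n C(n+m, n−q)·(−x)^q/q!`. -/
noncomputable def lag (n m : ℕ) (x : ℂ) : ℂ :=
  ∑ q ∈ Finset.range (n + 1), ((n + m).choose (n - q) : ℂ) * (-x) ^ q / (q.factorial : ℂ)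

/-- The `j`-th term of the series defining `g_{kl}(a,b,a′,b′)`. -/
noncomputable def gTerm (k l : ℕ) (a b a' b' : ℂ) (j : ℕ) : ℂ :=
  (j.factorial : ℂ) * (a * b') ^ j *
    ((a * b) ^ (-(min k j : ℤ)) / ((max k j).factorial : ℂ)) *
      lag (min k j) (Nat.dist k j) (-(a * b)) *
    ((a' * b') ^ (-(min l j : ℤ)) / ((max l j).factorial : ℂ)) *
      lag (min l j) (Nat.dist l j) (-(a' * b'))

/-- `g_{kl}(a,b,a′,b′)`. -/
noncomputable def gkl (k l : ℕ) (a b a' b' : ℂ) : ℂ :=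
  a' ^ l * b ^ k * ∑' j : ℕ, gTerm k l a b a' b' j


open Nat Finset

/-! With `x = ab`, the Laguerre factor `x^{-min(k,j)} L_{min(k,j)}^{|k-j|}(-x) / max(k,j)!` equals
`(1/(k! j!)) Σ_p C(k,p) C(j,p) p! x^{-p}`, which is symmetric in `k, j`. Hence `g_{k0}` splits into
finitely many shifted exponential series `Σ_j (ab')^j C(j,p) p!/j! = (ab')^p e^{ab'}`, and the binomial
theorem sums them to the closed form `g_{k0} = (b+b')^k/k! · e^{ab'}`, from which the recurrence is
immediate. -/

/-- `Σ_p C(k,p) C(j,p) p! z^p`, the Charlier polynomial `C_k(j; -1/z)`. -/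
noncomputable def charlier (k j : ℕ) (z : ℂ) : ℂ :=
  ∑ p ∈ range (k + 1), (k.choose p * j.choose p * p ! : ℂ) * z ^ p

theorem charlier_comm (k j : ℕ) (z : ℂ) : charlier k j z = charlier j k z := by
  wlog h : k ≤ j generalizing k j
  · exact (this j k (le_of_not_ge h)).symm
  unfold charlier
  refine (sum_subset (range_subset_range.2 (succ_le_succ h)) fun p _ hp => ?_).trans
    (sum_congr rfl fun p _ => by ring)
  rw [choose_eq_zero_of_lt (by simpa using hp)]
  simp

theorem factorial_mul_inv_pow_mul_lag {x : ℂ} (hx : x ≠ 0) (n m : ℕ) :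
    (n ! : ℂ) * (x ^ n)⁻¹ * lag n m (-x) = charlier n (n + m) x⁻¹ := by
  rw [lag, mul_sum, charlier, ← sum_range_reflect]
  refine sum_congr rfl fun p hp => ?_
  have hpn : p ≤ n := by simpa [Nat.lt_succ_iff] using hp
  have hfac : (n ! : ℂ) = n.choose p * p ! * (n - p)! := by
    exact_mod_cast (choose_mul_factorial_mul_factorial hpn).symm
  have hpow : x ^ (n - p) = x ^ n * (x ^ p)⁻¹ := pow_sub₀ x hx hpn
  have : ((n - p)! : ℂ) ≠ 0 := cast_ne_zero.2 (factorial_ne_zero _)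
  rw [add_tsub_cancel_right, Nat.sub_sub_self hpn, neg_neg, hfac, hpow, inv_pow]
  field_simp

theorem zpow_neg_min_div_mul_lag {x : ℂ} (hx : x ≠ 0) (k j : ℕ) :
    x ^ (-(min k j : ℤ)) / ((max k j)! : ℂ) * lag (min k j) (Nat.dist k j) (-x) =
      charlier k j x⁻¹ / (k ! * j !) := by
  wlog h : k ≤ j generalizing k j
  · rw [min_comm (k : ℤ), min_comm k, max_comm, Nat.dist_comm, this j k (le_of_not_ge h),
      charlier_comm, mul_comm (k ! : ℂ)]
  have hmin : min (k : ℤ) j = k := min_eq_left (by exact_mod_cast h)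
  rw [hmin, min_eq_left h, max_eq_right h, Nat.dist_eq_sub_of_le h, zpow_neg, zpow_natCast,
    ← Nat.add_sub_cancel' h, ← factorial_mul_inv_pow_mul_lag hx, Nat.add_sub_cancel' h]
  have : (k ! : ℂ) ≠ 0 := cast_ne_zero.2 (factorial_ne_zero _)
  field_simp

theorem gTerm_zero_right {a b : ℂ} (ha : a ≠ 0) (hb : b ≠ 0) (k : ℕ) (a' b' : ℂ) (j : ℕ) :
    gTerm k 0 a b a' b' j = (a * b') ^ j * charlier k j (a * b)⁻¹ / (k ! * j !) := by
  have hzero : (a' * b') ^ (-min ((0 : ℕ) : ℤ) j) / ((max 0 j)! : ℂ) *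
      lag (min 0 j) (Nat.dist 0 j) (-(a' * b')) = 1 / j ! := by
    simp [lag]
  rw [gTerm, mul_assoc ((j ! : ℂ) * _), zpow_neg_min_div_mul_lag (mul_ne_zero ha hb), mul_assoc,
    hzero]
  field_simp

theorem hasSum_pow_mul_choose_mul_factorial_div_factorial (y : ℂ) (p : ℕ) :
    HasSum (fun j => y ^ j * (j.choose p * p ! : ℂ) / j !) (y ^ p * Complex.exp y) := by
  rw [← hasSum_nat_add_iff' p, sum_eq_zero fun j hj => by
    rw [choose_eq_zero_of_lt (mem_range.1 hj)]; simp, sub_zero]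
  have hterm (j : ℕ) : y ^ (j + p) * ((j + p).choose p * p ! : ℂ) / (j + p)! =
      y ^ p * (y ^ j / j !) := by
    have hfac : ((j + p)! : ℂ) = (j + p).choose p * j ! * p ! := by
      exact_mod_cast (add_choose_mul_factorial_mul_factorial j p).symm
    have : ((j + p).choose p : ℂ) ≠ 0 := cast_ne_zero.2 (choose_pos (le_add_left p j)).ne'
    have : (p ! : ℂ) ≠ 0 := cast_ne_zero.2 (factorial_ne_zero _)
    rw [hfac, pow_add]
    field_simp
  simp only [hterm, Complex.exp_eq_exp_ℂ]
  exact (NormedSpace.expSeries_div_hasSum_exp y).mul_left _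

theorem hasSum_pow_mul_charlier (k : ℕ) (y z : ℂ) :
    HasSum (fun j => y ^ j * charlier k j z / (k ! * j !))
      ((1 + z * y) ^ k / k ! * Complex.exp y) := by
  have hsplit (j : ℕ) : y ^ j * charlier k j z / (k ! * j !) =
      ∑ p ∈ range (k + 1), (k.choose p * z ^ p / k ! : ℂ) * (y ^ j * (j.choose p * p ! : ℂ) / j !) := by
    rw [charlier, mul_sum, sum_div]
    exact sum_congr rfl fun p _ => by field_simp
  have hbinom : (1 + z * y) ^ k / k ! * Complex.exp y =
      ∑ p ∈ range (k + 1), (k.choose p * z ^ p / k ! : ℂ) * (y ^ p * Complex.exp y) := by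
    rw [add_comm, add_pow, sum_div, sum_mul]
    exact sum_congr rfl fun p _ => by simp only [one_pow, mul_one]; ring
  simp only [hsplit, hbinom]
  exact hasSum_sum fun p _ => (hasSum_pow_mul_choose_mul_factorial_div_factorial y p).mul_left _

theorem hasSum_gTerm_zero_right {a b : ℂ} (ha : a ≠ 0) (hb : b ≠ 0) (k : ℕ) (a' b' : ℂ) :
    HasSum (gTerm k 0 a b a' b') ((1 + b' / b) ^ k / k ! * Complex.exp (a * b')) := by
  have hzy : (a * b)⁻¹ * (a * b') = b' / b := by field_simp
  simp only [funext (gTerm_zero_right ha hb k a' b'), ← hzy]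
  exact hasSum_pow_mul_charlier k _ _

theorem gkl_zero_right {a b : ℂ} (ha : a ≠ 0) (hb : b ≠ 0) (k : ℕ) (a' b' : ℂ) :
    gkl k 0 a b a' b' = (b + b') ^ k / k ! * Complex.exp (a * b') := by
  rw [gkl, (hasSum_gTerm_zero_right ha hb k a' b').tsum_eq, pow_zero, one_mul, ← mul_assoc,
    mul_div_assoc', ← mul_pow, mul_add, mul_one, mul_div_cancel₀ _ hb]

theorem g_rec_one_general (k : ℕ) (a b a' b' : ℂ)
    (ha : a ≠ 0) (hb : b ≠ 0) :
    Summable (fun j : ℕ => ‖gTerm (k + 1) 0 a b a' b' j‖) ∧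
    Summable (fun j : ℕ => ‖gTerm k 0 a b a' b' j‖) ∧
      gkl (k + 1) 0 a b a' b' = ((b + b') / (k + 1 : ℂ)) * gkl k 0 a b a' b' := by
  refine ⟨summable_norm_iff.2 (hasSum_gTerm_zero_right ha hb (k + 1) a' b').summable,
    summable_norm_iff.2 (hasSum_gTerm_zero_right ha hb k a' b').summable, ?_⟩
  rw [gkl_zero_right ha hb, gkl_zero_right ha hb, factorial_succ, pow_succ]
  push_cast
  field_simp

/-- The recurrence `g_{k+1,0} = ((b+b′)/(k+1))·g_{k,0}`, both series converging absolutely. -/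
theorem g_rec_one (k : ℕ) (a b a' b' : ℂ)
    (ha : a ≠ 0) (hb : b ≠ 0) (ha' : a' ≠ 0) (hb' : b' ≠ 0) :
    Summable (fun j : ℕ => ‖gTerm (k + 1) 0 a b a' b' j‖) ∧
    Summable (fun j : ℕ => ‖gTerm k 0 a b a' b' j‖) ∧
      gkl (k + 1) 0 a b a' b' = ((b + b') / (k + 1 : ℂ)) * gkl k 0 a b a' b' :=
  g_rec_one_general k a b a' b' ha hb
end

section
/- For all nonnegative integers k, l with k ≥ l+1 and all complex numbers a, b, a′, b′, the recurrence f_{k,l+1}(a,b,a′,b′) = ((a+a′)/(l+1))·f_{k,l}(a,b,a′,b′) + (1/(l+1))·f_{k−1,l}(a,b,a′,b′) holds. -/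
/-!
Write `k = l + 1 + m`. In the region `l ≤ k` the factor `(a + a')` disappears from `f_{kl}`,
and after cancelling `e^{ab'} (b + b')^m / (l + m + 1)!` the recurrence becomes the Laguerre
three-term relation `(n + 1) L_{n+1}^m(x) = (n + m + 1) L_n^m(x) - x L_n^{m+1}(x)` at
`x = -(a + a')(b + b')`. That relation is checked coefficientwise: split `n + 1 = q + (n + 1 - q)`
in the `q`-th term; the `q` part shifts the index down to give `-x L_n^{m+1}(x)`, and the other
part becomes `(n + m + 1) L_n^m(x)` by `(j + 1) C(N + 1, j + 1) = (N + 1) C(N, j)`.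
-/

open scoped BigOperators

/-- `f_{kl}(a,b,a′,b′)`. -/
noncomputable def fkl (k l : ℕ) (a b a' b' : ℂ) : ℂ :=
  Complex.exp (a * b') * (a + a') ^ (l - min k l) * (b + b') ^ (k - min k l) *
    lag (min k l) (Nat.dist k l) (-((a + a') * (b + b'))) / ((max k l).factorial : ℂ)

theorem lag_succ_mul (n m : ℕ) (x : ℂ) :
    (n + 1 : ℂ) * lag (n + 1) m x = (n + m + 1 : ℂ) * lag n m x - x * lag n (m + 1) x := by
  set t : ℕ → ℂ := fun q ↦
    ((n + 1 + m).choose (n + 1 - q) : ℂ) * (-x) ^ q / (q.factorial : ℂ)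
  have hsplit : (n + 1 : ℂ) * lag (n + 1) m x =
      ∑ q ∈ Finset.range (n + 2), (q : ℂ) * t q +
        ∑ q ∈ Finset.range (n + 2), ((n + 1 - q : ℕ) : ℂ) * t q := by
    rw [lag, Finset.mul_sum, ← Finset.sum_add_distrib]
    refine Finset.sum_congr rfl fun q hq ↦ ?_
    rw [Nat.cast_sub (Finset.mem_range_succ_iff.mp hq)]
    push_cast
    ring
  have hlow : ∑ q ∈ Finset.range (n + 2), (q : ℂ) * t q = -x * lag n (m + 1) x := by
    rw [Finset.sum_range_succ', lag, Finset.mul_sum]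
    refine (add_eq_left.mpr (by simp)).trans (Finset.sum_congr rfl fun q _ ↦ ?_)
    simp only [t, Nat.factorial_succ, Nat.add_sub_add_right, pow_succ]
    rw [show n + (m + 1) = n + 1 + m by ring]
    push_cast
    field_simp
  have hraise : ∑ q ∈ Finset.range (n + 2), ((n + 1 - q : ℕ) : ℂ) * t q =
      (n + m + 1 : ℂ) * lag n m x := by
    rw [Finset.sum_range_succ, lag, Finset.mul_sum]
    refine (add_eq_left.mpr (by simp)).trans (Finset.sum_congr rfl fun q hq ↦ ?_)
    have hq : n + 1 - q = n - q + 1 := by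
      have := Finset.mem_range_succ_iff.mp hq
      omega
    have hchoose := Nat.add_one_mul_choose_eq (n + m) (n - q)
    simp only [t, hq, show n + 1 + m = n + m + 1 by ring]
    rw [← mul_div_assoc, ← mul_assoc, ← mul_div_assoc, ← mul_assoc, ← Nat.cast_mul,
      mul_comm (n - q + 1), ← hchoose]
    push_cast
    ring
  rw [hsplit, hlow, hraise]
  ring

theorem fkl_add_left (l m : ℕ) (a b a' b' : ℂ) :
    fkl (l + m) l a b a' b' = Complex.exp (a * b') * (b + b') ^ m *
      lag l m (-((a + a') * (b + b'))) / ((l + m).factorial : ℂ) := by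
  have hle : l ≤ l + m := Nat.le_add_right l m
  rw [fkl, min_eq_right hle, max_eq_left hle, Nat.dist_eq_sub_of_le_right hle,
    Nat.add_sub_cancel_left, Nat.sub_self, pow_zero, mul_one]

/-- For `k ≥ l+1`, the recurrence
`f_{k,l+1} = ((a+a′)/(l+1))·f_{k,l} + (1/(l+1))·f_{k−1,l}` holds. -/
theorem f_rec (k l : ℕ) (hkl : l + 1 ≤ k) (a b a' b' : ℂ) :
    fkl k (l + 1) a b a' b' =
      ((a + a') / (l + 1 : ℂ)) * fkl k l a b a' b' +
        (1 / (l + 1 : ℂ)) * fkl (k - 1) l a b a' b' := by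
  obtain ⟨m, rfl⟩ := Nat.exists_eq_add_of_le hkl
  have hrec := lag_succ_mul l m (-((a + a') * (b + b')))
  rw [show l + 1 + m - 1 = l + m by omega, fkl_add_left, fkl_add_left l m,
    show l + 1 + m = l + (m + 1) by ring, fkl_add_left,
    show l + (m + 1) = l + m + 1 by ring, Nat.factorial_succ]
  have hfac : ((l + m).factorial : ℂ) ≠ 0 := by exact_mod_cast (l + m).factorial_ne_zero
  have hlm : (l + m + 1 : ℂ) ≠ 0 := by exact_mod_cast (l + m).succ_ne_zero
  generalize hX : -((a + a') * (b + b')) = X at hrec ⊢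
  push_cast
  field_simp
  linear_combination (b + b') ^ m * hrec + (b + b') ^ m * lag l (m + 1) X * hX
end

section
/- For all nonnegative integers k, l with k ≥ l+1 and all nonzero complex numbers a, b, a′, b′, the recurrence g_{k,l+1}(a,b,a′,b′) = ((a+a′)/(l+1))·g_{k,l}(a,b,a′,b′) + (1/(l+1))·g_{k−1,l}(a,b,a′,b′) holds (all three series converging absolutely). -/
open scoped BigOperators

/-! Let `E k j u v = expCoeff k j u v`, which is `∂ₓᵏ ∂ᵧʲ exp (u x + v y + x y)` at the origin.
Each Laguerre block `(uv)^(-min k j) / (max k j)! · L_{min k j}^{|k-j|}(-uv)` equals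
`u^(-k) v^(-j) E k j u v / (k! j!)`, so `g_{kl}` is `(b/a)^k / (k! l!)` times
`∑ⱼ (a/b)^j E k j a b · E l j a' b' / j!`. Differentiating the exponential gives
`E (k+1) j = u E k j + j E k (j-1)` and the symmetric recurrence in `j`. Applying the first one to
`E (l+1) j a' b'` and the second one, after the shift `j ↦ j + 1`, to `E k (j+1) a b` turns the
series for `g_{k,l+1}` into those for `g_{kl}` and `g_{k-1,l}`. Absolute convergence comes from
`‖E k j u v‖ ≤ k! e^‖u‖ (e (1 + ‖v‖))^j`. -/

open Finset Nat

noncomputable def expCoeff (k j : ℕ) (u v : ℂ) : ℂ :=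
  ∑ i ∈ range (k + 1), (k.choose i * j.choose i * i ! : ℂ) * u ^ (k - i) * v ^ (j - i)

namespace expCoeff

lemma eq_sum_range (k j : ℕ) (u v : ℂ) {N : ℕ} (hN : min k j < N) :
    expCoeff k j u v =
      ∑ i ∈ range N, (k.choose i * j.choose i * i ! : ℂ) * u ^ (k - i) * v ^ (j - i) := by
  have h : ∀ M, min k j < M → ∑ i ∈ range M,
      (k.choose i * j.choose i * i ! : ℂ) * u ^ (k - i) * v ^ (j - i) =
      ∑ i ∈ range (min k j + 1),
      (k.choose i * j.choose i * i ! : ℂ) * u ^ (k - i) * v ^ (j - i) := fun M hM ↦ by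
    refine (sum_subset (range_subset_range.mpr hM) fun i _ hi ↦ ?_).symm
    obtain hik | hij : k < i ∨ j < i := by simp at hi; omega
    · simp [choose_eq_zero_of_lt hik]
    · simp [choose_eq_zero_of_lt hij]
  rw [expCoeff, h _ (by omega), h _ hN]

lemma comm (k j : ℕ) (u v : ℂ) : expCoeff k j u v = expCoeff j k v u := by
  rw [eq_sum_range k j u v (N := k + j + 1) (by omega),
    eq_sum_range j k v u (N := k + j + 1) (by omega)]
  exact sum_congr rfl fun i _ ↦ by ring

lemma succ_left (k j : ℕ) (u v : ℂ) :
    expCoeff (k + 1) j u v = u * expCoeff k j u v + j * expCoeff k (j - 1) u v := by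
  have key := sum_choose_succ_mul
    (fun i m ↦ (j.choose i * i ! : ℂ) * u ^ m * v ^ (j - i)) k
  have hchoose : ∀ i, (j.choose (i + 1) * (i + 1)! : ℂ) = j * ((j - 1).choose i * i !) := by
    intro i
    rcases j with _ | j
    · simp
    · rw [factorial_succ, add_tsub_cancel_right]
      exact_mod_cast (by rw [← mul_assoc, ← add_one_mul_choose_eq, mul_assoc] :
        (j + 1).choose (i + 1) * ((i + 1) * i !) = (j + 1) * (j.choose i * i !))
  rw [expCoeff, expCoeff, expCoeff, mul_sum, mul_sum]
  convert key using 1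
  · exact sum_congr rfl fun i _ ↦ by ring
  congr 1
  · refine sum_congr rfl fun i hi ↦ ?_
    rw [show k + 1 - i = k - i + 1 by simp at hi; omega]
    ring
  · refine sum_congr rfl fun i _ ↦ ?_
    rw [show j - 1 - i = j - (i + 1) by omega, mul_assoc (k.choose i : ℂ), hchoose]
    ring

lemma succ_right (k j : ℕ) (u v : ℂ) :
    expCoeff k (j + 1) u v = v * expCoeff k j u v + k * expCoeff (k - 1) j u v := by
  rw [comm, succ_left, comm j k, comm j (k - 1)]

lemma eq_lag {k j : ℕ} (hjk : j ≤ k) (u v : ℂ) :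
    expCoeff k j u v = j ! * u ^ (k - j) * lag j (k - j) (-(u * v)) := by
  rw [eq_sum_range k j u v (N := j + 1) (by omega), lag, add_tsub_cancel_of_le hjk,
    ← sum_range_reflect, mul_sum]
  refine sum_congr rfl fun i hi ↦ ?_
  have hij : i ≤ j := by simp at hi; omega
  rw [add_tsub_cancel_right, show k - (j - i) = (k - j) + i by omega, pow_add, neg_neg, mul_pow,
    ← choose_mul_factorial_mul_factorial (Nat.sub_le j i), Nat.sub_sub_self hij]
  push_cast
  field_simp [(i !).cast_ne_zero.mpr (factorial_ne_zero i)]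

lemma norm_le (k j : ℕ) (u v : ℂ) : ‖expCoeff k j u v‖ ≤ (j + ‖u‖) ^ k * (1 + ‖v‖) ^ j := by
  rw [add_pow, sum_mul]
  refine (norm_sum_le _ _).trans (sum_le_sum fun i _ ↦ ?_)
  have hdesc : (j.choose i * i ! : ℝ) ≤ (j : ℝ) ^ i := by
    exact_mod_cast (descFactorial_eq_factorial_mul_choose j i ▸ descFactorial_le_pow j i :
      i ! * j.choose i ≤ j ^ i).trans_eq' (mul_comm _ _)
  have hv : ‖v‖ ^ (j - i) ≤ (1 + ‖v‖) ^ j :=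
    (pow_le_pow_left₀ (norm_nonneg v) (by linarith) _).trans
      (pow_le_pow_right₀ (by linarith [norm_nonneg v]) (Nat.sub_le j i))
  simp only [norm_mul, norm_pow, Complex.norm_natCast]
  calc (k.choose i : ℝ) * j.choose i * i ! * ‖u‖ ^ (k - i) * ‖v‖ ^ (j - i)
      = k.choose i * ‖u‖ ^ (k - i) * (j.choose i * i !) * ‖v‖ ^ (j - i) := by ring
    _ ≤ k.choose i * ‖u‖ ^ (k - i) * (j : ℝ) ^ i * (1 + ‖v‖) ^ j := by gcongr
    _ = _ := by ring

lemma norm_le_exp (k j : ℕ) (u v : ℂ) :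
    ‖expCoeff k j u v‖ ≤ k ! * Real.exp ‖u‖ * (Real.exp 1 * (1 + ‖v‖)) ^ j := by
  have hexp : (j + ‖u‖) ^ k ≤ k ! * (Real.exp ‖u‖ * Real.exp 1 ^ j) := by
    rw [← Real.exp_nat_mul, mul_one, ← Real.exp_add, add_comm ‖u‖, ← div_le_iff₀' (by positivity)]
    exact Real.pow_div_factorial_le_exp _ (by positivity) k
  calc ‖expCoeff k j u v‖ ≤ (j + ‖u‖) ^ k * (1 + ‖v‖) ^ j := norm_le k j u v
    _ ≤ k ! * (Real.exp ‖u‖ * Real.exp 1 ^ j) * (1 + ‖v‖) ^ j := by gcongr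
    _ = _ := by rw [mul_pow]; ring

end expCoeff

lemma zpow_div_mul_lag_eq_expCoeff {u v : ℂ} (hu : u ≠ 0) (hv : v ≠ 0) (k j : ℕ) :
    (u * v) ^ (-(min k j : ℤ)) / (max k j)! * lag (min k j) (Nat.dist k j) (-(u * v)) =
      u ^ (-(k : ℤ)) * v ^ (-(j : ℤ)) * expCoeff k j u v / (k ! * j !) := by
  wlog hjk : j ≤ k generalizing u v k j
  · rw [min_comm (k : ℤ), min_comm k, max_comm, Nat.dist_comm, mul_comm u v,
      this hv hu j k (by omega), expCoeff.comm]
    ring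
  obtain ⟨d, rfl⟩ := Nat.exists_eq_add_of_le hjk
  rw [expCoeff.eq_lag hjk, min_eq_right (by exact_mod_cast hjk), min_eq_right hjk,
    max_eq_left hjk, Nat.dist_eq_sub_of_le_right hjk, Nat.add_sub_cancel_left, zpow_neg, zpow_neg,
    zpow_neg, zpow_natCast, zpow_natCast, zpow_natCast, pow_add, mul_pow]
  field_simp [(j !).cast_ne_zero.mpr (factorial_ne_zero j)]

noncomputable def expCoeffTerm (k l : ℕ) (a b a' b' : ℂ) (j : ℕ) : ℂ :=
  (a / b) ^ j * expCoeff k j a b * expCoeff l j a' b' / j !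

section

variable {a b a' b' : ℂ}

lemma gTerm_eq_mul_expCoeffTerm (ha : a ≠ 0) (hb : b ≠ 0) (ha' : a' ≠ 0) (hb' : b' ≠ 0)
    (k l j : ℕ) :
    gTerm k l a b a' b' j =
      a ^ (-(k : ℤ)) * a' ^ (-(l : ℤ)) / (k ! * l !) * expCoeffTerm k l a b a' b' j := by
  rw [gTerm, expCoeffTerm, mul_assoc _ ((a * b) ^ _ / _), zpow_div_mul_lag_eq_expCoeff ha hb,
    mul_assoc _ ((a' * b') ^ _ / _), zpow_div_mul_lag_eq_expCoeff ha' hb', zpow_neg, zpow_neg,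
    zpow_neg, zpow_neg, zpow_natCast, zpow_natCast, zpow_natCast, zpow_natCast, div_pow, mul_pow]
  field_simp

lemma gkl_eq_tsum_expCoeffTerm (ha : a ≠ 0) (hb : b ≠ 0) (ha' : a' ≠ 0) (hb' : b' ≠ 0)
    (k l : ℕ) :
    gkl k l a b a' b' = (b / a) ^ k / (k ! * l !) * ∑' j, expCoeffTerm k l a b a' b' j := by
  rw [gkl, tsum_congr (gTerm_eq_mul_expCoeffTerm ha hb ha' hb' k l), tsum_mul_left, zpow_neg,
    zpow_neg, zpow_natCast, zpow_natCast, div_pow]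
  field_simp

end

lemma summable_norm_expCoeffTerm (k l : ℕ) (a b a' b' : ℂ) :
    Summable fun j ↦ ‖expCoeffTerm k l a b a' b' j‖ := by
  set x := ‖a‖ / ‖b‖ * (Real.exp 1 * (1 + ‖b‖)) * (Real.exp 1 * (1 + ‖b'‖))
  refine .of_nonneg_of_le (fun _ ↦ norm_nonneg _) (fun j ↦ ?_)
    ((Real.summable_pow_div_factorial x).mul_left (k ! * Real.exp ‖a‖ * (l ! * Real.exp ‖a'‖)))
  simp only [expCoeffTerm, norm_div, norm_mul, norm_pow, Complex.norm_natCast]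
  calc (‖a‖ / ‖b‖) ^ j * ‖expCoeff k j a b‖ * ‖expCoeff l j a' b'‖ / j !
      ≤ (‖a‖ / ‖b‖) ^ j * (k ! * Real.exp ‖a‖ * (Real.exp 1 * (1 + ‖b‖)) ^ j) *
          (l ! * Real.exp ‖a'‖ * (Real.exp 1 * (1 + ‖b'‖)) ^ j) / j ! := by
        gcongr <;> apply expCoeff.norm_le_exp
    _ = _ := by simp only [x, div_pow, mul_pow]; ring

lemma tsum_expCoeffTerm_succ_right {b : ℂ} (hb : b ≠ 0) (k l : ℕ) (a a' b' : ℂ) :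
    ∑' j, expCoeffTerm k (l + 1) a b a' b' j =
      (a + a') * ∑' j, expCoeffTerm k l a b a' b' j +
        k * (a / b) * ∑' j, expCoeffTerm (k - 1) l a b a' b' j := by
  have hsum (m n : ℕ) : Summable (expCoeffTerm m n a b a' b') :=
    (summable_norm_expCoeffTerm m n a b a' b').of_norm
  set D : ℕ → ℂ := fun j ↦ expCoeffTerm k (l + 1) a b a' b' j - a' * expCoeffTerm k l a b a' b' j
  have hD (j : ℕ) :
      D j = (a / b) ^ j * expCoeff k j a b * (j * expCoeff l (j - 1) a' b') / j ! := by
    simp only [D, expCoeffTerm, expCoeff.succ_left]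
    ring
  -- The factor `j` in `D j` kills `D 0` and cancels against `(j + 1)!` in the shifted terms.
  have hD_succ (j : ℕ) : D (j + 1) =
      a * expCoeffTerm k l a b a' b' j + k * (a / b) * expCoeffTerm (k - 1) l a b a' b' j := by
    rw [hD, expCoeff.succ_right, add_tsub_cancel_right, factorial_succ, expCoeffTerm,
      expCoeffTerm, pow_succ]
    push_cast
    field_simp [(j !).cast_ne_zero.mpr (factorial_ne_zero j)]
  have hD_summable : Summable D := (hsum k (l + 1)).sub ((hsum k l).mul_left a')
  calc ∑' j, expCoeffTerm k (l + 1) a b a' b' j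
      = a' * ∑' j, expCoeffTerm k l a b a' b' j + ∑' j, D j := by
        rw [(hsum k (l + 1)).tsum_sub ((hsum k l).mul_left a'), tsum_mul_left]
        ring
    _ = a' * ∑' j, expCoeffTerm k l a b a' b' j + ∑' j, (a * expCoeffTerm k l a b a' b' j +
          k * (a / b) * expCoeffTerm (k - 1) l a b a' b' j) := by
        rw [hD_summable.tsum_eq_zero_add, hD 0]
        simp [hD_succ]
    _ = _ := by
        rw [((hsum k l).mul_left a).tsum_add ((hsum (k - 1) l).mul_left _), tsum_mul_left,
          tsum_mul_left]
        ring

/-- For `k ≥ l+1`, the recurrence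
`g_{k,l+1} = ((a+a′)/(l+1))·g_{k,l} + (1/(l+1))·g_{k−1,l}` holds,
all three series converging absolutely. -/
theorem g_rec (k l : ℕ) (hkl : l + 1 ≤ k) (a b a' b' : ℂ)
    (ha : a ≠ 0) (hb : b ≠ 0) (ha' : a' ≠ 0) (hb' : b' ≠ 0) :
    Summable (fun j : ℕ => ‖gTerm k (l + 1) a b a' b' j‖) ∧
    Summable (fun j : ℕ => ‖gTerm k l a b a' b' j‖) ∧
    Summable (fun j : ℕ => ‖gTerm (k - 1) l a b a' b' j‖) ∧
      gkl k (l + 1) a b a' b' =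
        ((a + a') / (l + 1 : ℂ)) * gkl k l a b a' b' +
          (1 / (l + 1 : ℂ)) * gkl (k - 1) l a b a' b' := by
  have hsum (m n : ℕ) : Summable fun j ↦ ‖gTerm m n a b a' b' j‖ := by
    simp_rw [gTerm_eq_mul_expCoeffTerm ha hb ha' hb', norm_mul]
    exact (summable_norm_expCoeffTerm m n a b a' b').mul_left _
  refine ⟨hsum _ _, hsum _ _, hsum _ _, ?_⟩
  obtain ⟨k, rfl⟩ : ∃ k', k = k' + 1 := ⟨k - 1, by omega⟩
  rw [gkl_eq_tsum_expCoeffTerm ha hb ha' hb', gkl_eq_tsum_expCoeffTerm ha hb ha' hb',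
    gkl_eq_tsum_expCoeffTerm ha hb ha' hb', tsum_expCoeffTerm_succ_right hb,
    add_tsub_cancel_right, factorial_succ, factorial_succ, pow_succ]
  push_cast
  field_simp
end

section
/- For every nonnegative integer k, all nonzero complex numbers a, b and every complex number b′, the series b^k·Σ_{j=0}^∞ (ab′)^j·(ab)^{−min(k,j)}·L_{min(k,j)}^{|k−j|}(−ab)/max(k,j)! converges absolutely and equals e^{ab′}·(b+b′)^k/k!. -/
open scoped BigOperators

/-! Expanding the Laguerre polynomial, the `j`-th term of the series becomes
`∑_{r ≤ min(k, j)} b'^r b^(k-r) C(k, r)/k! · (ab')^(j-r)/(j-r)!`, the `j`-th coefficient of the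
Cauchy product of the binomial expansion of `(b + b')^k / k!` with the exponential series of `ab'`.
Both factors are absolutely summable, so the series sums to the product of the two sums. -/

open Finset Nat

theorem zpow_neg_mul_lag_neg_div_factorial {x : ℂ} (hx : x ≠ 0) (n m : ℕ) :
    x ^ (-(n : ℤ)) * lag n m (-x) / ((n + m)! : ℂ) =
      ∑ r ∈ range (n + 1), x ^ (-(r : ℤ)) / (r ! * (n - r)! * (n + m - r)! : ℂ) := by
  rw [lag, ← sum_range_reflect, mul_sum, sum_div]
  refine sum_congr rfl fun r hr => ?_
  obtain ⟨s, rfl⟩ := Nat.exists_eq_add_of_le (mem_range_succ_iff.1 hr)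
  rw [show r + s + 1 - 1 - r = s by omega, show r + s - s = r by omega,
    show r + s - r = s by omega, cast_choose ℂ (show r ≤ r + s + m by omega),
    show r + s + m - r = s + m by omega,
    neg_neg, zpow_neg, zpow_neg, zpow_natCast, zpow_natCast]
  have := (r + s + m).factorial_ne_zero
  field_simp
  ring

theorem sum_range_min_eq_sum_range {R : Type*} [NonUnitalNonAssocSemiring R] {c e : ℕ → R}
    {k : ℕ} (hc : ∀ r, k < r → c r = 0) (j : ℕ) :
    ∑ r ∈ range (min k j + 1), c r * e (j - r) = ∑ r ∈ range (j + 1), c r * e (j - r) := by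
  refine sum_subset (range_subset_range.2 (by omega)) fun r hr hr' => ?_
  simp only [mem_range] at hr hr'
  rw [hc r (by omega), zero_mul]

theorem mul_zpow_neg_div_factorial_eq {a b : ℂ} (ha : a ≠ 0) (hb : b ≠ 0) (b' : ℂ)
    {k j r : ℕ} (hrk : r ≤ k) (hrj : r ≤ j) :
    b ^ k * (a * b') ^ j * (a * b) ^ (-(r : ℤ)) / (r ! * (k - r)! * (j - r)! : ℂ) =
      b' ^ r * b ^ (k - r) * k.choose r / k ! * ((a * b') ^ (j - r) / (j - r)!) := by
  obtain ⟨s, rfl⟩ := Nat.exists_eq_add_of_le hrk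
  obtain ⟨t, rfl⟩ := Nat.exists_eq_add_of_le hrj
  rw [cast_choose ℂ hrk, Nat.add_sub_cancel_left, Nat.add_sub_cancel_left, zpow_neg,
    zpow_natCast]
  have := (r + s).factorial_ne_zero
  field_simp
  ring

theorem term_eq_sum_range_min {a b : ℂ} (ha : a ≠ 0) (hb : b ≠ 0) (b' : ℂ) (k j : ℕ) :
    b ^ k * ((a * b') ^ j * (a * b) ^ (-(min k j : ℤ)) *
      lag (min k j) (Nat.dist k j) (-(a * b)) / ((max k j).factorial : ℂ)) =
      ∑ r ∈ range (min k j + 1),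
        b' ^ r * b ^ (k - r) * k.choose r / k ! * ((a * b') ^ (j - r) / (j - r)!) := by
  have hmax : min k j + Nat.dist k j = max k j := by simp only [Nat.dist]; omega
  have hfac : ∀ r, (r ! * (min k j - r)! * (max k j - r)! : ℂ) = r ! * (k - r)! * (j - r)! :=
    fun r => by rcases le_total k j with h | h <;> simp [h, mul_right_comm]
  rw [mul_assoc, mul_div_assoc, ← hmax, ← Nat.cast_min,
    zpow_neg_mul_lag_neg_div_factorial (mul_ne_zero ha hb), mul_sum, mul_sum, hmax]
  refine sum_congr rfl fun r hr => ?_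
  have hr : r ≤ min k j := by simpa only [mem_range, Nat.lt_succ_iff] using hr
  rw [hfac, ← mul_zpow_neg_div_factorial_eq ha hb b' (hr.trans (min_le_left k j))
    (hr.trans (min_le_right k j))]
  ring

/-- For every `k` and nonzero complex `a, b` and any complex `b′`, the series
`b^k·Σ_{j=0}^∞ (ab′)^j·(ab)^{−min(k,j)}·L_{min(k,j)}^{|k−j|}(−ab)/max(k,j)!`
converges absolutely and equals `e^{ab′}·(b+b′)^k/k!`. -/
theorem g_row_zero (k : ℕ) (a b b' : ℂ) (ha : a ≠ 0) (hb : b ≠ 0) :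
    Summable (fun j : ℕ => ‖b ^ k * ((a * b') ^ j * (a * b) ^ (-(min k j : ℤ)) *
      lag (min k j) (Nat.dist k j) (-(a * b)) / ((max k j).factorial : ℂ))‖) ∧
    b ^ k * ∑' j : ℕ, (a * b') ^ j * (a * b) ^ (-(min k j : ℤ)) *
        lag (min k j) (Nat.dist k j) (-(a * b)) / ((max k j).factorial : ℂ) =
      Complex.exp (a * b') * (b + b') ^ k / (k.factorial : ℂ) := by
  set c : ℕ → ℂ := fun r => b' ^ r * b ^ (k - r) * k.choose r / (k ! : ℂ)
  set e : ℕ → ℂ := fun n => (a * b') ^ n / (n ! : ℂ)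
  have hc_lt : ∀ r, k < r → c r = 0 := fun r hr => by simp [c, choose_eq_zero_of_lt hr]
  have hc_zero : ∀ r ∉ range (k + 1), c r = 0 := fun r hr => hc_lt r (by simpa using hr)
  have hc : Summable (‖c ·‖) :=
    summable_of_ne_finset_zero (s := range (k + 1)) fun r hr => by simp [hc_zero r hr]
  have he : Summable (‖e ·‖) := NormedSpace.norm_expSeries_div_summable (a * b')
  have hterm : ∀ j, _ = ∑ r ∈ range (j + 1), c r * e (j - r) := fun j =>
    (term_eq_sum_range_min ha hb b' k j).trans (sum_range_min_eq_sum_range (e := e) hc_lt j)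
  refine ⟨by simpa only [hterm] using summable_norm_sum_mul_range_of_summable_norm hc he, ?_⟩
  rw [← tsum_mul_left, tsum_congr hterm, ← tsum_mul_tsum_eq_tsum_sum_range_of_summable_norm hc he,
    tsum_eq_sum hc_zero, (NormedSpace.expSeries_div_hasSum_exp (a * b')).tsum_eq,
    ← Complex.exp_eq_exp_ℂ, add_comm b, add_pow, mul_div_assoc, sum_div, mul_comm]
end

section
/- Let N ≥ 1 and let k, l be integers with 0 ≤ l ≤ k ≤ N and k + l ≤ N. Then for every 2×2 complex matrix G: ⟨N,k| G^{⊗N} |N,l⟩ = √(binom(N,k)/binom(N,l)) · Σ_{m=0}^{l} binom(k,m)·binom(N−k, l−m)·(G_{11})^m·(G_{10})^{k−m}·(G_{01})^{l−m}·(G_{00})^{N−k−l+m}. -/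
/-! Identify bit strings with subsets of `Fin N`. The entry of `G^{⊗N}` between the indicator
strings of `S` and `T` is `G₁₁^|S ∩ T| G₁₀^|S \ T| G₀₁^|T \ S| G₀₀^|(S ∪ T)ᶜ|`, which for `|S| = k`,
`|T| = l` depends only on `m = |S ∩ T|`. For fixed `S`, an `l`-set `T` with `|S ∩ T| = m` is an
`m`-subset of `S` together with an `(l - m)`-subset of `Sᶜ`, so there are
`C(k, m) C(N - k, l - m)` of them. The inner sum over `T` is then independent of `S`, and the
`C(N, k)` choices of `S` combine with the normalisations `C(N, k)^{-1/2} C(N, l)^{-1/2}` into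
`√(C(N, k) / C(N, l))`. -/

open scoped BigOperators

/-- Kronecker (tensor) product of `N` matrices of size `d × d`, acting on `(ℂ^d)^{⊗N}`
realized as `(Fin N → Fin d) → ℂ`. -/
noncomputable def kron {d : ℕ} (N : ℕ) (M : Fin N → Matrix (Fin d) (Fin d) ℂ) :
    Matrix (Fin N → Fin d) (Fin N → Fin d) ℂ :=
  Matrix.of fun b b' => ∏ i, M i (b i) (b' i)

/-- `N`-fold tensor (Kronecker) power of a matrix. -/
noncomputable def tensPow {d : ℕ} (N : ℕ) (M : Matrix (Fin d) (Fin d) ℂ) :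
    Matrix (Fin N → Fin d) (Fin N → Fin d) ℂ :=
  kron N fun _ => M

/-- The Dicke state `|N,k⟩` on `N` qubits. -/
noncomputable def dicke (N k : ℕ) : (Fin N → Fin 2) → ℂ := fun b =>
  if (Finset.univ.filter fun i => b i = 1).card = k then
    ((Real.sqrt (N.choose k))⁻¹ : ℝ) else 0

/-- The matrix element `⟨N,k| M |N,l⟩` for an operator `M` on `(ℂ²)^{⊗N}`. -/
noncomputable def matElem (N k l : ℕ) (M : Matrix (Fin N → Fin 2) (Fin N → Fin 2) ℂ) : ℂ :=
  ∑ b : Fin N → Fin 2, ∑ b' : Fin N → Fin 2,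
    (starRingEnd ℂ) (dicke N k b) * M b b' * dicke N l b'

open Finset

section Bits

variable {α : Type*} [DecidableEq α]

theorem inter_union_eq_of_subset_of_disjoint {S P Q : Finset α} (hP : P ⊆ S) (hQ : Disjoint S Q) :
    S ∩ (P ∪ Q) = P := by
  rw [inter_union_distrib_left, inter_eq_right.mpr hP, disjoint_iff_inter_eq_empty.mp hQ,
    union_empty]

theorem union_sdiff_eq_of_subset_of_disjoint {S P Q : Finset α} (hP : P ⊆ S) (hQ : Disjoint S Q) :
    (P ∪ Q) \ S = Q := by
  rw [union_sdiff_distrib, sdiff_eq_empty_iff_subset.mpr hP, empty_union,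
    sdiff_eq_self_of_disjoint hQ.symm]

variable [Fintype α]

def finsetEquivBits : Finset α ≃ (α → Fin 2) where
  toFun S i := if i ∈ S then 1 else 0
  invFun b := {i | b i = 1}
  left_inv S := by ext i; by_cases h : i ∈ S <;> simp [h]
  right_inv b := by funext i; rcases Fin.exists_fin_two.mp ⟨b i, rfl⟩ with h | h <;> simp [h]

theorem finsetEquivBits_apply (S : Finset α) (i : α) :
    finsetEquivBits S i = if i ∈ S then 1 else 0 := rfl

theorem filter_finsetEquivBits_eq_one (S : Finset α) :
    ({i | finsetEquivBits S i = 1} : Finset α) = S :=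
  finsetEquivBits.left_inv S

theorem prod_apply_finsetEquivBits {M : Type*} [CommMonoid M] (h : Fin 2 → M)
    (A T : Finset α) :
    ∏ i ∈ A, h (finsetEquivBits T i) = h 1 ^ #(A ∩ T) * h 0 ^ #(A \ T) := by
  simp only [finsetEquivBits_apply, apply_ite h, prod_ite, filter_mem_eq_inter,
    filter_notMem_eq_sdiff, prod_const]

theorem prod_finsetEquivBits {M : Type*} [CommMonoid M] (f : Fin 2 → Fin 2 → M)
    (S T : Finset α) :
    ∏ i, f (finsetEquivBits S i) (finsetEquivBits T i) =
      f 1 1 ^ #(S ∩ T) * f 1 0 ^ #(S \ T) * f 0 1 ^ #(T \ S) * f 0 0 ^ #(S ∪ T)ᶜ := by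
  have hS : ∏ i ∈ S, f (finsetEquivBits S i) (finsetEquivBits T i) =
      ∏ i ∈ S, f 1 (finsetEquivBits T i) :=
    prod_congr rfl fun i hi => by rw [finsetEquivBits_apply, if_pos hi]
  have hSc : ∏ i ∈ Sᶜ, f (finsetEquivBits S i) (finsetEquivBits T i) =
      ∏ i ∈ Sᶜ, f 0 (finsetEquivBits T i) :=
    prod_congr rfl fun i hi => by rw [finsetEquivBits_apply, if_neg (mem_compl.mp hi)]
  have h01 : Sᶜ ∩ T = T \ S := by ext; simp [and_comm]
  have h00 : Sᶜ \ T = (S ∪ T)ᶜ := by ext; simp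
  rw [← prod_mul_prod_compl S, hS, hSc, prod_apply_finsetEquivBits, prod_apply_finsetEquivBits,
    h01, h00]
  simp only [mul_assoc]

theorem card_filter_powersetCard_card_inter (S : Finset α) {l m : ℕ} (hml : m ≤ l) :
    #{T ∈ powersetCard l univ | #(S ∩ T) = m} =
      (#S).choose m * (Fintype.card α - #S).choose (l - m) := by
  rw [← card_compl, ← card_powersetCard, ← card_powersetCard, ← card_product]
  apply card_nbij' (fun T => (S ∩ T, T \ S)) (fun PQ => PQ.1 ∪ PQ.2)
  · intro T hT
    simp only [mem_coe, mem_filter, mem_powersetCard_univ] at hT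
    obtain ⟨hTl, hSTm⟩ := hT
    simp only [coe_product, Set.mem_prod, mem_coe, mem_powersetCard]
    refine ⟨⟨inter_subset_left, hSTm⟩, subset_compl_iff_disjoint_right.mpr sdiff_disjoint, ?_⟩
    rw [card_sdiff, hTl, hSTm]
  · rintro ⟨P, Q⟩ hPQ
    simp only [coe_product, Set.mem_prod, mem_coe, mem_powersetCard,
      subset_compl_iff_disjoint_left] at hPQ
    obtain ⟨⟨hPS, hPm⟩, hQS, hQl⟩ := hPQ
    simp only [mem_coe, mem_filter, mem_powersetCard_univ]
    rw [card_union_of_disjoint (disjoint_of_subset_left hPS hQS),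
      inter_union_eq_of_subset_of_disjoint hPS hQS]
    omega
  · intro T _
    dsimp only
    rw [union_comm, inter_comm, sdiff_union_inter]
  · rintro ⟨P, Q⟩ hPQ
    simp only [coe_product, Set.mem_prod, mem_coe, mem_powersetCard,
      subset_compl_iff_disjoint_left] at hPQ
    obtain ⟨⟨hPS, -⟩, hQS, -⟩ := hPQ
    simp only [inter_union_eq_of_subset_of_disjoint hPS hQS,
      union_sdiff_eq_of_subset_of_disjoint hPS hQS]

theorem prod_finsetEquivBits_of_card {M : Type*} [CommMonoid M] (f : Fin 2 → Fin 2 → M)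
    {S T : Finset α} {k l : ℕ} (hS : #S = k) (hT : #T = l) (hkl : k + l ≤ Fintype.card α) :
    ∏ i, f (finsetEquivBits S i) (finsetEquivBits T i) =
      f 1 1 ^ #(S ∩ T) * f 1 0 ^ (k - #(S ∩ T)) * f 0 1 ^ (l - #(S ∩ T)) *
        f 0 0 ^ (Fintype.card α - k - l + #(S ∩ T)) := by
  have hST : #(S ∪ T) + #(S ∩ T) = k + l := hS ▸ hT ▸ card_union_add_card_inter S T
  have hSc : #(S ∪ T)ᶜ = Fintype.card α - k - l + #(S ∩ T) := by
    rw [card_compl]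
    omega
  rw [prod_finsetEquivBits, card_sdiff, card_sdiff, inter_comm T S, hS, hT, hSc]

theorem sum_powersetCard_eq_sum_card_inter {M : Type*} [AddCommMonoid M] (S : Finset α) (l : ℕ)
    (g : ℕ → M) :
    ∑ T ∈ powersetCard l univ, g #(S ∩ T) =
      ∑ m ∈ range (l + 1), ((#S).choose m * (Fintype.card α - #S).choose (l - m)) • g m := by
  have hmaps : ∀ T ∈ powersetCard l univ, #(S ∩ T) ∈ range (l + 1) := fun T hT =>
    mem_range_succ_iff.mpr
      ((card_le_card inter_subset_right).trans (mem_powersetCard_univ.mp hT).le)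
  rw [← sum_fiberwise_of_maps_to hmaps]
  refine sum_congr rfl fun m hm => ?_
  rw [sum_congr rfl fun T hT => congrArg g (mem_filter.mp hT).2, sum_const,
    card_filter_powersetCard_card_inter S (mem_range_succ_iff.mp hm)]

end Bits

theorem tensPow_apply {d : ℕ} (N : ℕ) (M : Matrix (Fin d) (Fin d) ℂ) (b b' : Fin N → Fin d) :
    tensPow N M b b' = ∏ i, M (b i) (b' i) := rfl

theorem dicke_finsetEquivBits (N k : ℕ) (S : Finset (Fin N)) :
    dicke N k (finsetEquivBits S) =
      if #S = k then (((Real.sqrt (N.choose k))⁻¹ : ℝ) : ℂ) else 0 := by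
  rw [dicke, filter_finsetEquivBits_eq_one]

theorem matElem_eq_sum_powersetCard (N k l : ℕ) (M : Matrix (Fin N → Fin 2) (Fin N → Fin 2) ℂ) :
    matElem N k l M = ((Real.sqrt (N.choose k))⁻¹ * (Real.sqrt (N.choose l))⁻¹ : ℝ) *
      ∑ S ∈ powersetCard k univ, ∑ T ∈ powersetCard l univ,
        M (finsetEquivBits S) (finsetEquivBits T) := by
  simp only [matElem, ← finsetEquivBits.sum_comp, dicke_finsetEquivBits, powersetCard_eq_filter,
    powerset_univ, sum_filter, mul_sum]
  refine sum_congr rfl fun S _ => ?_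
  by_cases hS : #S = k
  · simp only [hS, if_true, mul_sum]
    refine sum_congr rfl fun T _ => ?_
    by_cases hT : #T = l
    · rw [if_pos hT, if_pos hT, Complex.conj_ofReal]
      push_cast
      ring
    · rw [if_neg hT, if_neg hT, mul_zero, mul_zero]
  · simp [hS]

theorem inv_sqrt_mul_inv_sqrt_mul_eq_sqrt_div {a : ℝ} (ha : 0 ≤ a) (b : ℝ) :
    (Real.sqrt a)⁻¹ * (Real.sqrt b)⁻¹ * a = Real.sqrt (a / b) := by
  calc (Real.sqrt a)⁻¹ * (Real.sqrt b)⁻¹ * a = a / Real.sqrt a / Real.sqrt b := by ring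
    _ = Real.sqrt (a / b) := by rw [Real.div_sqrt, Real.sqrt_div ha]

theorem dicke_matElem_tensPow_general (N k l : ℕ) (hklN : k + l ≤ N) (G : Matrix (Fin 2) (Fin 2) ℂ) :
    matElem N k l (tensPow N G) =
      (Real.sqrt ((N.choose k : ℝ) / (N.choose l : ℝ)) : ℝ) *
        ∑ m ∈ Finset.range (l + 1),
          (k.choose m : ℂ) * ((N - k).choose (l - m) : ℂ) *
            G 1 1 ^ m * G 1 0 ^ (k - m) * G 0 1 ^ (l - m) * G 0 0 ^ (N - k - l + m) := by
  set term : ℕ → ℂ := fun m =>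
    G 1 1 ^ m * G 1 0 ^ (k - m) * G 0 1 ^ (l - m) * G 0 0 ^ (N - k - l + m)
  have hentry : ∀ S ∈ powersetCard k univ, ∀ T ∈ powersetCard l univ,
      tensPow N G (finsetEquivBits S) (finsetEquivBits T) = term #(S ∩ T) := by
    intro S hS T hT
    rw [mem_powersetCard_univ] at hS hT
    rw [tensPow_apply, prod_finsetEquivBits_of_card G hS hT (by rwa [Fintype.card_fin]),
      Fintype.card_fin]
  have hinner : ∀ S ∈ powersetCard k (univ : Finset (Fin N)),
      ∑ T ∈ powersetCard l univ, term #(S ∩ T) =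
        ∑ m ∈ range (l + 1), (k.choose m * (N - k).choose (l - m)) • term m := by
    intro S hS
    rw [sum_powersetCard_eq_sum_card_inter, mem_powersetCard_univ.mp hS, Fintype.card_fin]
  rw [matElem_eq_sum_powersetCard, sum_congr rfl fun S hS => sum_congr rfl (hentry S hS),
    sum_congr rfl hinner, sum_const, card_powersetCard, card_univ, Fintype.card_fin,
    ← inv_sqrt_mul_inv_sqrt_mul_eq_sqrt_div (Nat.cast_nonneg (N.choose k))]
  simp only [mul_sum, nsmul_eq_mul, term]
  push_cast
  exact sum_congr rfl fun m _ => by ring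

/-- Matrix elements of a tensor power between Dicke states. -/
theorem dicke_matElem_tensPow (N k l : ℕ) (hN : 1 ≤ N) (hlk : l ≤ k) (hkN : k ≤ N)
    (hklN : k + l ≤ N) (G : Matrix (Fin 2) (Fin 2) ℂ) :
    matElem N k l (tensPow N G) =
      (Real.sqrt ((N.choose k : ℝ) / (N.choose l : ℝ)) : ℝ) *
        ∑ m ∈ Finset.range (l + 1),
          (k.choose m : ℂ) * ((N - k).choose (l - m) : ℂ) *
            G 1 1 ^ m * G 1 0 ^ (k - m) * G 0 1 ^ (l - m) * G 0 0 ^ (N - k - l + m) :=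
  dicke_matElem_tensPow_general N k l hklN G
end

section
/- For all nonnegative integers k ≥ l and all real x and p: (1/π)·∫_{−∞}^{+∞} e^{2ips}·h_l(x−s)·h_k(x+s) ds = (e^{−x²−p²}/π)·(−1)^l·√(2^k·l!/(2^l·k!))·(x+ip)^{k−l}·L_l^{k−l}(2x²+2p²). -/
open scoped BigOperators
open MeasureTheory

/-- Physicists' Hermite polynomials. -/
noncomputable def hermiteH : ℕ → ℝ → ℝ
  | 0 => fun _ => 1
  | 1 => fun x => 2 * x
  | (n + 2) => fun x => 2 * x * hermiteH (n + 1) x - 2 * (n + 1) * hermiteH n x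

/-- Hermite functions `h_k(x) = (2^k·k!·√π)^{−1/2}·e^{−x²/2}·H_k(x)`. -/
noncomputable def hermFun (k : ℕ) (x : ℝ) : ℝ :=
  (Real.sqrt (2 ^ k * (k.factorial : ℝ) * Real.sqrt Real.pi))⁻¹ *
    Real.exp (-x ^ 2 / 2) * hermiteH k x

/-!
Writing out the Hermite functions, the integrand is `e^{-x²}` times
`H_l(x - s) H_k(x + s) e^{-s² + 2ips}`, so everything reduces to the linear functional
`P ↦ ∫ P(s) e^{-s² + 2ips} ds` on complex polynomials. Integration by parts gives
`∫ s P = ip ∫ P + ½ ∫ P'`; together with `H_{n+1} = 2X H_n - 2n H_{n-1}` and `H_n' = 2n H_{n-1}`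
it turns `W(l, k) = ∫ H_l(x - s) H_k(x + s) e^{-s² + 2ips} ds` into the recurrences
`W(l+1, k) = 2(x - ip) W(l, k) - 2k W(l, k-1)` and
`W(l, k+1) = 2(x + ip) W(l, k) - 2l W(l-1, k)`.
Starting from the Gaussian integral `W(0, 0) = √π e^{-p²}`, they are solved by
`W(l, l+m) = √π e^{-p²} (-1)^l 2^{l+m} l! (x + ip)^m L_l^m(2x² + 2p²)`: since
`(x - ip)(x + ip) = x² + p²`, the recurrence in `l` is the Laguerre recurrence
`(n+1) L_{n+1}^m(u) = (n+m+1) L_n^m(u) - u L_n^{m+1}(u)`.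
-/

open Polynomial

noncomputable def physHermite (R : Type*) [CommRing R] : ℕ → R[X]
  | 0 => 1
  | 1 => 2 * X
  | n + 2 => 2 * X * physHermite R (n + 1) - 2 * (n + 1 : R[X]) * physHermite R n

section physHermite

variable (R : Type*) [CommRing R]

theorem physHermite_succ (n : ℕ) :
    physHermite R (n + 1) = 2 * X * physHermite R n - 2 * (n : R[X]) * physHermite R (n - 1) := by
  rcases n with _ | n <;> simp [physHermite]

theorem derivative_physHermite_succ (n : ℕ) :
    derivative (physHermite R (n + 1)) = 2 * (n + 1 : R[X]) * physHermite R n := by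
  induction n using Nat.twoStepInduction with
  | zero => simp [physHermite]
  | one => simp [physHermite]; ring
  | more n ih₀ ih₁ =>
    rw [physHermite, derivative_sub, derivative_mul, derivative_mul, ih₁, physHermite]
    simp only [derivative_mul, derivative_ofNat, derivative_X, derivative_add, derivative_natCast,
      derivative_one, ih₀, Nat.cast_add, Nat.cast_one, Nat.cast_ofNat]
    ring

theorem derivative_physHermite (n : ℕ) :
    derivative (physHermite R n) = 2 * (n : R[X]) * physHermite R (n - 1) := by
  rcases n with _ | n
  · simp [physHermite]
  · simp [derivative_physHermite_succ]

end physHermite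

theorem eval_physHermite (n : ℕ) (t : ℝ) :
    (physHermite ℂ n).eval (t : ℂ) = hermiteH n t := by
  induction n using Nat.twoStepInduction with
  | zero => simp [physHermite, hermiteH]
  | one => simp [physHermite, hermiteH]
  | more n ih₀ ih₁ =>
    simp only [physHermite, hermiteH, eval_sub, eval_mul, eval_ofNat, eval_X, eval_add,
      eval_natCast, eval_one, ih₀, ih₁]
    push_cast
    ring

open Real
open Complex (I)
open scoped Complex

noncomputable def gaussWeight (p s : ℝ) : ℂ := cexp (-(s : ℂ) ^ 2 + 2 * I * p * s)

theorem norm_gaussWeight (p s : ℝ) : ‖gaussWeight p s‖ = Real.exp (-s ^ 2) := by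
  rw [gaussWeight, Complex.norm_exp]
  congr 1
  simp [← Complex.ofReal_pow]

theorem integrable_pow_mul_gaussWeight (n : ℕ) (p : ℝ) :
    Integrable fun s : ℝ => (s : ℂ) ^ n * gaussWeight p s := by
  have hbound : Integrable fun s : ℝ => |s| ^ (n : ℝ) * Real.exp (-1 * s ^ 2) :=
    (integrable_rpow_mul_exp_neg_mul_sq one_pos (neg_one_lt_zero.trans_le n.cast_nonneg)).abs
      |>.congr (.of_forall fun s => by simp [abs_mul])
  refine hbound.mono' (by unfold gaussWeight; fun_prop) (.of_forall fun s => ?_)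
  simp [norm_gaussWeight]

theorem integrable_eval_mul_gaussWeight (P : ℂ[X]) (p : ℝ) :
    Integrable fun s : ℝ => P.eval (s : ℂ) * gaussWeight p s := by
  simp_rw [eval_eq_sum_range, Finset.sum_mul, mul_assoc]
  exact integrable_finsetSum _ fun i _ => (integrable_pow_mul_gaussWeight i p).const_mul _

noncomputable def gaussIntegral (p : ℝ) : ℂ[X] →ₗ[ℂ] ℂ where
  toFun P := ∫ s : ℝ, P.eval (s : ℂ) * gaussWeight p s
  map_add' P Q := by
    simp only [eval_add, add_mul]
    exact integral_add (integrable_eval_mul_gaussWeight P p)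
      (integrable_eval_mul_gaussWeight Q p)
  map_smul' a P := by
    simp only [eval_smul, smul_eq_mul, mul_assoc, RingHom.id_apply]
    exact integral_const_mul a _

theorem gaussIntegral_apply (p : ℝ) (P : ℂ[X]) :
    gaussIntegral p P = ∫ s : ℝ, P.eval (s : ℂ) * gaussWeight p s := rfl

theorem gaussIntegral_one (p : ℝ) :
    gaussIntegral p 1 = ((√π * Real.exp (-p ^ 2) : ℝ) : ℂ) := by
  have hweight (s : ℝ) :
      gaussWeight p s = cexp (I * (2 * p) * s) * cexp (-1 * (s : ℂ) ^ 2) := by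
    rw [gaussWeight, ← Complex.exp_add]
    ring_nf
  simp_rw [gaussIntegral_apply, eval_one, one_mul, hweight,
    fourierIntegral_gaussian (b := 1) (by simp) (2 * p), div_one]
  rw [Complex.ofReal_mul, Complex.ofReal_exp, Real.sqrt_eq_rpow, Complex.ofReal_cpow pi_pos.le]
  push_cast
  ring_nf

theorem gaussIntegral_derivative_sub (p : ℝ) (P : ℂ[X]) :
    gaussIntegral p (derivative P - (2 * X - C (2 * I * p)) * P) = 0 := by
  have hderiv (s : ℝ) : HasDerivAt (fun t : ℝ => P.eval (t : ℂ) * gaussWeight p t)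
      ((derivative P - (2 * X - C (2 * I * p)) * P).eval (s : ℂ) * gaussWeight p s) s := by
    have hexp : HasDerivAt (fun w : ℂ => -w ^ 2 + 2 * I * p * w) (-(2 * s) + 2 * I * p) s := by
      have h := (hasDerivAt_pow 2 (s : ℂ)).neg.add ((hasDerivAt_id (s : ℂ)).const_mul (2 * I * p))
      exact h.congr_deriv (by simp)
    convert ((P.hasDerivAt s).mul hexp.cexp).comp_ofReal using 1
    · rfl
    simp only [eval_sub, eval_mul, eval_ofNat, eval_X, eval_C, gaussWeight]
    ring
  exact integral_eq_zero_of_hasDerivAt_of_integrable hderiv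
    (integrable_eval_mul_gaussWeight _ p) (integrable_eval_mul_gaussWeight P p)

theorem gaussIntegral_C_mul (p : ℝ) (a : ℂ) (P : ℂ[X]) :
    gaussIntegral p (C a * P) = a * gaussIntegral p P := by
  rw [C_mul', map_smul, smul_eq_mul]

theorem gaussIntegral_X_mul (p : ℝ) (P : ℂ[X]) :
    gaussIntegral p (X * P) = I * p * gaussIntegral p P + gaussIntegral p (derivative P) / 2 := by
  have h := gaussIntegral_derivative_sub p P
  rw [sub_mul, mul_assoc, two_mul, map_sub, map_sub, map_add, gaussIntegral_C_mul] at h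
  linear_combination (-1 / 2 : ℂ) * h

noncomputable def hermitePair (x : ℝ) (l k : ℕ) : ℂ[X] :=
  (physHermite ℂ l).comp (C (x : ℂ) - X) * (physHermite ℂ k).comp (C (x : ℂ) + X)

section hermitePair

variable (x : ℝ) (l k : ℕ)

theorem hermitePair_succ_left :
    hermitePair x (l + 1) k = C (2 * x : ℂ) * hermitePair x l k - C 2 * (X * hermitePair x l k)
      - C (2 * l : ℂ) * hermitePair x (l - 1) k := by
  simp only [hermitePair, physHermite_succ, sub_comp, mul_comp, X_comp, ofNat_comp, natCast_comp,
    map_mul, map_ofNat, map_natCast]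
  ring

theorem hermitePair_succ_right :
    hermitePair x l (k + 1) = C (2 * x : ℂ) * hermitePair x l k + C 2 * (X * hermitePair x l k)
      - C (2 * k : ℂ) * hermitePair x l (k - 1) := by
  simp only [hermitePair, physHermite_succ, sub_comp, mul_comp, X_comp, ofNat_comp, natCast_comp,
    map_mul, map_ofNat, map_natCast]
  ring

theorem derivative_hermitePair :
    derivative (hermitePair x l k) =
      C (2 * k : ℂ) * hermitePair x l (k - 1) - C (2 * l : ℂ) * hermitePair x (l - 1) k := by
  simp only [hermitePair, derivative_mul, derivative_comp, derivative_physHermite, mul_comp,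
    ofNat_comp, natCast_comp, derivative_sub, derivative_add, derivative_C, derivative_X,
    map_mul, map_ofNat, map_natCast]
  ring

variable (p : ℝ)

theorem gaussIntegral_hermitePair_succ_left :
    gaussIntegral p (hermitePair x (l + 1) k) =
      2 * (x - I * p) * gaussIntegral p (hermitePair x l k)
        - 2 * k * gaussIntegral p (hermitePair x l (k - 1)) := by
  simp only [hermitePair_succ_left, gaussIntegral_X_mul, derivative_hermitePair, map_sub,
    gaussIntegral_C_mul]
  ring

theorem gaussIntegral_hermitePair_succ_right :
    gaussIntegral p (hermitePair x l (k + 1)) =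
      2 * (x + I * p) * gaussIntegral p (hermitePair x l k)
        - 2 * l * gaussIntegral p (hermitePair x (l - 1) k) := by
  simp only [hermitePair_succ_right, gaussIntegral_X_mul, derivative_hermitePair, map_add,
    map_sub, gaussIntegral_C_mul]
  ring

end hermitePair

theorem lag_zero (m : ℕ) (u : ℂ) : lag 0 m u = 1 := by
  simp [lag]

theorem lag_succ (n m : ℕ) (u : ℂ) :
    ((n : ℂ) + 1) * lag (n + 1) m u = ((n : ℂ) + m + 1) * lag n m u - u * lag n (m + 1) u := by
  set t : ℕ → ℂ := fun q => ((n + 1 + m).choose (n + 1 - q) : ℂ) * (-u) ^ q / q.factorial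
  have hsplit : ((n : ℂ) + 1) * lag (n + 1) m u =
      ∑ q ∈ Finset.range (n + 2), ((n : ℂ) + 1 - q) * t q +
        ∑ q ∈ Finset.range (n + 2), q * t q := by
    rw [lag, ← Finset.sum_add_distrib, Finset.mul_sum]
    exact Finset.sum_congr rfl fun q _ => by ring
  have hlow :
      ∑ q ∈ Finset.range (n + 2), ((n : ℂ) + 1 - q) * t q = ((n : ℂ) + m + 1) * lag n m u := by
    rw [Finset.sum_range_succ, lag, Finset.mul_sum, Nat.cast_add_one, sub_self, zero_mul,
      add_zero]
    refine Finset.sum_congr rfl fun q hq => ?_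
    have hq : q ≤ n := Nat.lt_succ_iff.mp (Finset.mem_range.mp hq)
    have hchoose : ((n : ℂ) + m + 1) * (n + m).choose (n - q) =
        (n + m + 1).choose (n - q + 1) * ((n - q : ℕ) + 1) := by
      exact_mod_cast Nat.add_one_mul_choose_eq (n + m) (n - q)
    simp only [t, show n + 1 + m = n + m + 1 by ring, show n + 1 - q = n - q + 1 by omega]
    have hcast : ((n : ℂ) + 1 - q) = ((n - q : ℕ) : ℂ) + 1 := by push_cast [hq]; ring
    rw [hcast]
    linear_combination -(-u) ^ q / q.factorial * hchoose
  have hhigh : ∑ q ∈ Finset.range (n + 2), q * t q = -(u * lag n (m + 1) u) := by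
    rw [Finset.sum_range_succ', lag, Finset.mul_sum, ← Finset.sum_neg_distrib, Nat.cast_zero,
      zero_mul, add_zero]
    refine Finset.sum_congr rfl fun q _ => ?_
    simp only [t, Nat.add_sub_add_right, show n + 1 + m = n + (m + 1) by ring, Nat.factorial_succ]
    push_cast
    field_simp
    ring
  rw [hsplit, hlow, hhigh, sub_eq_add_neg]

theorem gaussIntegral_hermitePair (x p : ℝ) (l m : ℕ) :
    gaussIntegral p (hermitePair x l (l + m)) =
      ((√π * Real.exp (-p ^ 2) : ℝ) : ℂ) * (-1) ^ l * 2 ^ (l + m) * l.factorial *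
        (x + I * p) ^ m * lag l m ((2 * x ^ 2 + 2 * p ^ 2 : ℝ) : ℂ) := by
  induction l generalizing m with
  | zero =>
    induction m with
    | zero => simp [hermitePair, physHermite, gaussIntegral_one, lag_zero]
    | succ m ih =>
      rw [zero_add] at ih ⊢
      rw [gaussIntegral_hermitePair_succ_right, ih, lag_zero, lag_zero]
      push_cast
      ring
  | succ l ih =>
    have h := gaussIntegral_hermitePair_succ_left x l (l + 1 + m) p
    rw [show l + 1 + m - 1 = l + m by omega, show l + 1 + m = l + (m + 1) by ring, ih, ih] at h
    rw [show l + 1 + m = l + (m + 1) by ring, h, Nat.factorial_succ]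
    have hlag := lag_succ l m ((2 * x ^ 2 + 2 * p ^ 2 : ℝ) : ℂ)
    push_cast at hlag ⊢
    set K : ℂ := √π * cexp (-p ^ 2) * (-1) ^ l * 2 ^ (l + m) * l.factorial * (x + I * p) ^ m
    linear_combination 2 * K * hlag
      - 4 * K * p ^ 2 * lag l (m + 1) (2 * x ^ 2 + 2 * p ^ 2) * Complex.I_sq

theorem eval_hermitePair (x s : ℝ) (l k : ℕ) :
    (hermitePair x l k).eval (s : ℂ) = hermiteH l (x - s) * hermiteH k (x + s) := by
  simp only [hermitePair, eval_mul, eval_comp, eval_sub, eval_add, eval_C, eval_X]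
  rw [← Complex.ofReal_sub, ← Complex.ofReal_add, eval_physHermite, eval_physHermite]

noncomputable def hermNorm (k : ℕ) : ℝ := (√(2 ^ k * k.factorial * √π))⁻¹

theorem hermFun_eq (k : ℕ) (t : ℝ) :
    hermFun k t = hermNorm k * Real.exp (-t ^ 2 / 2) * hermiteH k t := rfl

theorem hermNorm_mul_hermNorm (l k : ℕ) :
    hermNorm l * hermNorm k * √π * (2 ^ k * l.factorial) =
      √(2 ^ k * l.factorial / (2 ^ l * k.factorial)) := by
  rw [eq_comm, Real.sqrt_eq_iff_eq_sq (by positivity) (by unfold hermNorm; positivity)]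
  simp only [hermNorm, mul_pow, inv_pow]
  rw [Real.sq_sqrt (by positivity : (0 : ℝ) ≤ 2 ^ l * l.factorial * √π),
    Real.sq_sqrt (by positivity : (0 : ℝ) ≤ 2 ^ k * k.factorial * √π)]
  field_simp

theorem cexp_mul_hermFun_mul_hermFun (l k : ℕ) (x p s : ℝ) :
    cexp (2 * I * p * s) * hermFun l (x - s) * hermFun k (x + s) =
      ((hermNorm l * hermNorm k * Real.exp (-x ^ 2) : ℝ) : ℂ) *
        ((hermitePair x l k).eval (s : ℂ) * gaussWeight p s) := by
  have hexp : cexp (2 * I * p * s) * cexp (-(x - s : ℂ) ^ 2 / 2) * cexp (-(x + s : ℂ) ^ 2 / 2) =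
      cexp (-x ^ 2) * gaussWeight p s := by
    simp only [gaussWeight, ← Complex.exp_add]
    ring_nf
  simp only [hermFun_eq, eval_hermitePair]
  push_cast
  linear_combination
    (hermNorm l * hermNorm k * hermiteH l (x - s) * hermiteH k (x + s) : ℂ) * hexp

/-- The Wigner-transform integral of a product of Hermite functions in terms of
Laguerre polynomials. -/
theorem wigner_hermite (k l : ℕ) (hkl : l ≤ k) (x p : ℝ) :
    (1 / (Real.pi : ℂ)) *
      ∫ s : ℝ, Complex.exp (2 * Complex.I * (p : ℂ) * (s : ℂ)) *
        ((hermFun l (x - s) : ℝ) : ℂ) * ((hermFun k (x + s) : ℝ) : ℂ) =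
      ((Real.exp (-x ^ 2 - p ^ 2) / Real.pi : ℝ) : ℂ) * (-1 : ℂ) ^ l *
        ((Real.sqrt ((2 ^ k * (l.factorial : ℝ)) / (2 ^ l * (k.factorial : ℝ))) : ℝ) : ℂ) *
        ((x : ℂ) + Complex.I * (p : ℂ)) ^ (k - l) *
        lag l (k - l) ((2 * x ^ 2 + 2 * p ^ 2 : ℝ) : ℂ) := by
  obtain ⟨m, rfl⟩ := Nat.exists_eq_add_of_le hkl
  simp_rw [cexp_mul_hermFun_mul_hermFun, integral_const_mul, ← gaussIntegral_apply,
    gaussIntegral_hermitePair, Nat.add_sub_cancel_left, ← hermNorm_mul_hermNorm,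
    show -x ^ 2 - p ^ 2 = -x ^ 2 + -p ^ 2 by ring, Real.exp_add]
  push_cast
  ring
end

section
/- The real number (2/(675π))·(577 + √1244179 + 2700·arctan(1/3)) is strictly greater than 2. -/
/-- The Leggett-Garg CHSH parameter obtained in the paper exceeds the
macrorealistic bound 2. -/
theorem leggett_garg_violation :
    2 < (2 / (675 * Real.pi)) *
      (577 + Real.sqrt 1244179 + 2700 * Real.arctan (1 / 3)) := by
  have hpi : (0:ℝ) < Real.pi := Real.pi_pos
  have hsqrt : (1115:ℝ) ≤ Real.sqrt 1244179 := by
    rw [show (1115:ℝ) = Real.sqrt (1115^2) by rw [Real.sqrt_sq]; norm_num]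
    exact Real.sqrt_le_sqrt (by norm_num)
  have h2 : Real.arctan (1/2) < 1/2 := by
    have h0 : 0 < Real.arctan (1/2) := by rw [show (0:ℝ) = Real.arctan 0 by simp]; exact Real.arctan_strictMono (by norm_num)
    have := Real.lt_tan h0 (Real.arctan_lt_pi_div_two _)
    rwa [Real.tan_arctan] at this
  have hid : Real.arctan (1/3) = Real.pi / 4 - Real.arctan (1/2) := by
    have := Real.arctan_inv_2_add_arctan_inv_3
    norm_num at this ⊢
    linarith
  have hS : 675 * Real.pi < 577 + Real.sqrt 1244179 + 2700 * Real.arctan (1/3) := by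
    rw [hid]; nlinarith
  rw [div_mul_eq_mul_div, lt_div_iff₀ (by positivity)]
  nlinarith
end
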